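/- arXiv:2503.02074 — 3 statements merged into one kernel-verified Lean document; each statement's English description precedes it below -/
import Mathlib

section
/- Let I ⊆ ℝ be a nondegenerate interval containing one of its endpoints s, and let κ : I → I be continuously differentiable and strictly increasing with κ(s) = s, κ'(s) < 1, and κ(x) ≠ x for every x in the interior of I. Let q : I → (0,∞) be positive, bounded, and continuously differentiable with q'(s) ≠ 0. Then for every integer m ≥ 0 and every x ∈ {s} ∪ interior(I), the limit lim_{t→∞} ∏_{i=m}^t q(κ^{[i]}(x))/q(s) exists and is a positive real number. -/
/-!
Since `κ'(s) < 1` and `κ` cannot move points across the endpoint `s`, near `s` the map is a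
contraction towards `s`: `|κ y - s| ≤ r |y - s|` with `r < 1`. As `κ` has no fixed point in the
interior of `I`, the intermediate value theorem shows that `κ` moves every interior point towards
`s`; so each orbit is monotone, and its limit is a fixed point, which must be `s`. Once the orbit is
in the contraction zone, `∑ |κ^[n] x - s|` converges by the ratio test, and differentiability of
`q` at `s` gives `q (κ^[n] x) - q s = O(κ^[n] x - s)`. Hence the logarithms of the factors
`q (κ^[n] x) / q s` are summable, and the tail products converge to the exponential of a finite sum.
-/

open Set Filter Topology

lemma abs_le_mul_abs_of_abs_sub_mul_le {d e k ε : ℝ} (h : |e - k * d| ≤ ε * |d|)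
    (hsign : 0 ≤ e * d) : |e| ≤ (k + ε) * |d| := by
  rcases lt_trichotomy d 0 with hd | rfl | hd
  · have he : e ≤ 0 := nonpos_of_mul_nonneg_left hsign hd
    rw [abs_of_neg hd, abs_of_nonpos he] at *
    linarith [neg_abs_le (e - k * d)]
  · simp_all
  · have he : 0 ≤ e := nonneg_of_mul_nonneg_left hsign hd
    rw [abs_of_pos hd, abs_of_nonneg he] at *
    linarith [le_abs_self (e - k * d)]

lemma HasDerivWithinAt.exists_lt_one_eventually_abs_sub_le {κ : ℝ → ℝ} {I : Set ℝ} {s k : ℝ}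
    (h : HasDerivWithinAt κ k I s) (hfix : κ s = s) (hk : k < 1)
    (hsign : ∀ y ∈ I, 0 ≤ (κ y - s) * (y - s)) :
    ∃ r < 1, ∀ᶠ y in 𝓝[I] s, |κ y - s| ≤ r * |y - s| := by
  refine ⟨k + (1 - k) / 2, by linarith, ?_⟩
  filter_upwards [h.isLittleO.def (by linarith : 0 < (1 - k) / 2), self_mem_nhdsWithin]
    with y hy hyI
  rw [hfix, smul_eq_mul, mul_comm (y - s)] at hy
  exact abs_le_mul_abs_of_abs_sub_mul_le hy (hsign y hyI)

lemma summable_iterate_sub_of_eventually_abs_sub_le {κ : ℝ → ℝ} {I : Set ℝ} {s r x : ℝ}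
    (hr : r < 1) (hcontr : ∀ᶠ y in 𝓝[I] s, |κ y - s| ≤ r * |y - s|)
    (horbit : Tendsto (fun n ↦ κ^[n] x) atTop (𝓝[I] s)) :
    Summable fun n ↦ κ^[n] x - s :=
  summable_of_ratio_norm_eventually_le hr <| (horbit.eventually hcontr).mono fun n hn ↦ by
    simpa only [Function.iterate_succ_apply', Real.norm_eq_abs] using hn

lemma HasDerivWithinAt.summable_comp_sub {f : ℝ → ℝ} {I : Set ℝ} {a f' : ℝ} {u : ℕ → ℝ}
    (hf : HasDerivWithinAt f f' I a) (hu : Tendsto u atTop (𝓝[I] a))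
    (hsum : Summable fun n ↦ u n - a) : Summable fun n ↦ f (u n) - f a :=
  summable_of_isBigO_nat hsum (hf.hasFDerivWithinAt.isBigO_sub.comp_tendsto hu)

lemma exists_pos_tendsto_prod_Icc_of_summable_log {f : ℕ → ℝ} (hpos : ∀ i, 0 < f i)
    (hlog : Summable fun i ↦ Real.log (f i)) (m : ℕ) :
    ∃ L, 0 < L ∧ Tendsto (fun t ↦ ∏ i ∈ Finset.Icc m t, f i) atTop (𝓝 L) := by
  have hshift : Summable fun k ↦ Real.log (f (m + k)) := by
    simpa only [add_comm m] using (summable_nat_add_iff m).2 hlog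
  have hprod := Real.multipliable_of_summable_log (fun k ↦ hpos (m + k)) hshift
  refine ⟨_, Real.rexp_tsum_eq_tprod (fun k ↦ hpos (m + k)) hshift ▸ Real.exp_pos _, ?_⟩
  refine (hprod.tendsto_prod_tprod_nat.comp (tendsto_sub_atTop_nat m |>.comp
    (tendsto_add_atTop_nat 1))).congr fun t ↦ ?_
  simp only [Function.comp_apply, ← Finset.Ico_add_one_right_eq_Icc, Finset.prod_Ico_eq_prod_range]

section

lemma Set.OrdConnected.Ioo_subset_interior {α : Type*} [LinearOrder α] [TopologicalSpace α]
    [OrderClosedTopology α] {I : Set α} (hI : I.OrdConnected) {a b : α} (ha : a ∈ I)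
    (hb : b ∈ I) : Ioo a b ⊆ interior I :=
  interior_maximal (Ioo_subset_Icc_self.trans (hI.out ha hb)) isOpen_Ioo

variable {α : Type*} [ConditionallyCompleteLinearOrder α] [TopologicalSpace α] [OrderTopology α]
  [DenselyOrdered α] {κ : α → α} {I : Set α} {s : α}

lemma apply_lt_self_of_mem_interior (hI : I.OrdConnected) (hs : IsLeast I s)
    (hcont : ContinuousOn κ I) (hfix : κ s = s) (hnofix : ∀ y ∈ interior I, κ y ≠ y)
    (hnear : ∀ᶠ y in 𝓝[I] s, s < y → κ y < y) {z : α} (hz : z ∈ interior I) : κ z < z := by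
  have hsz : s < z := (hs.2 (interior_subset hz)).lt_of_ne
    (by rintro rfl; exact hnofix s hz hfix)
  have hsub : Icc s z ⊆ I := hI.out hs.1 (interior_subset hz)
  obtain ⟨y, hy, hyz⟩ : ∃ y, (s < y → κ y < y) ∧ y ∈ Ioo s z :=
    haveI := left_nhdsWithin_Ioo_neBot hsz
    ((hnear.filter_mono (nhdsWithin_mono s (Ioo_subset_Icc_self.trans hsub))).and
      self_mem_nhdsWithin).exists
  refine (le_or_gt z (κ z)).elim (fun hzκ ↦ ?_) id
  obtain ⟨w, hw, hκw⟩ := isPreconnected_Icc.intermediate_value₂ (left_mem_Icc.2 hyz.2.le)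
    (right_mem_Icc.2 hyz.2.le) (hcont.mono ((Icc_subset_Icc_left hyz.1.le).trans hsub))
    continuousOn_id (hy hyz.1).le hzκ
  have hwz : w ≠ z := by rintro rfl; exact hnofix w hz hκw
  exact absurd hκw (hnofix w (hI.Ioo_subset_interior hs.1 (interior_subset hz)
    ⟨hyz.1.trans_le hw.1, hw.2.lt_of_ne hwz⟩))

lemma tendsto_iterate_of_isLeast (hI : I.OrdConnected) (hs : IsLeast I s) (hmaps : MapsTo κ I I)
    (hcont : ContinuousOn κ I) (hfix : κ s = s) (hnofix : ∀ y ∈ interior I, κ y ≠ y)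
    (hnear : ∀ᶠ y in 𝓝[I] s, s < y → κ y < y) {x : α} (hx : x ∈ interior I) :
    Tendsto (fun n ↦ κ^[n] x) atTop (𝓝[I] s) := by
  have hxI := interior_subset hx
  have hsub : Icc s x ⊆ I := hI.out hs.1 hxI
  have hle : ∀ y ∈ Icc s x, κ y ≤ y := by
    intro y hy
    rcases hy.1.eq_or_lt with rfl | hsy
    · exact hfix.le
    rcases hy.2.eq_or_lt with rfl | hyx
    · exact (apply_lt_self_of_mem_interior hI hs hcont hfix hnofix hnear hx).le
    exact (apply_lt_self_of_mem_interior hI hs hcont hfix hnofix hnear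
      (hI.Ioo_subset_interior hs.1 hxI ⟨hsy, hyx⟩)).le
  have hmapsIcc : MapsTo κ (Icc s x) (Icc s x) := fun y hy ↦
    ⟨hs.2 (hmaps (hsub hy)), (hle y hy).trans hy.2⟩
  have horbit : ∀ n, κ^[n] x ∈ Icc s x := fun n ↦ hmapsIcc.iterate n (right_mem_Icc.2 (hs.2 hxI))
  have hanti : Antitone fun n ↦ κ^[n] x := antitone_nat_of_succ_le fun n ↦ by
    rw [Function.iterate_succ_apply']; exact hle _ (horbit n)
  have hbdd : BddBelow (range fun n ↦ κ^[n] x) := ⟨s, by rintro _ ⟨n, rfl⟩; exact (horbit n).1⟩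
  set l := ⨅ n, κ^[n] x
  have hlim : Tendsto (fun n ↦ κ^[n] x) atTop (𝓝 l) := tendsto_atTop_ciInf hanti hbdd
  have hl : l ∈ Icc s x := isClosed_Icc.mem_of_tendsto hlim (Eventually.of_forall horbit)
  have hinI : ∀ n, κ^[n] x ∈ I := fun n ↦ hsub (horbit n)
  have hfixl : κ l = l := tendsto_nhds_unique (f := fun n ↦ κ (κ^[n] x))
    ((hcont l (hsub hl)).tendsto.comp (tendsto_nhdsWithin_iff.2 ⟨hlim, .of_forall hinI⟩))
    (by simpa only [Function.comp_def, Function.iterate_succ_apply'] using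
      hlim.comp (tendsto_add_atTop_nat 1))
  have hls : l = s := by
    refine hl.1.eq_or_lt.elim Eq.symm fun hsl ↦ absurd hfixl ?_
    have hlx : l < x := (ciInf_le hbdd 1).trans_lt <| by
      simpa only [Function.iterate_one] using
        apply_lt_self_of_mem_interior hI hs hcont hfix hnofix hnear hx
    exact hnofix l (hI.Ioo_subset_interior hs.1 hxI ⟨hsl, hlx⟩)
  exact tendsto_nhdsWithin_iff.2 ⟨hls ▸ hlim, .of_forall hinI⟩

end

lemma tendsto_iterate_of_eventually_abs_sub_le {κ : ℝ → ℝ} {I : Set ℝ} {s r x : ℝ}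
    (hI : I.OrdConnected) (hsI : s ∈ I) (hend : (∀ y ∈ I, s ≤ y) ∨ (∀ y ∈ I, y ≤ s))
    (hmaps : MapsTo κ I I) (hcont : ContinuousOn κ I) (hfix : κ s = s)
    (hnofix : ∀ y ∈ interior I, κ y ≠ y) (hr : r < 1)
    (hcontr : ∀ᶠ y in 𝓝[I] s, |κ y - s| ≤ r * |y - s|) (hx : x ∈ insert s (interior I)) :
    Tendsto (fun n ↦ κ^[n] x) atTop (𝓝[I] s) := by
  rcases hx with rfl | hx
  · simpa only [Function.iterate_fixed hfix] using tendsto_const_nhdsWithin hsI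
  rcases hend with hleft | hright
  · refine tendsto_iterate_of_isLeast hI ⟨hsI, hleft⟩ hmaps hcont hfix hnofix
      (hcontr.mono fun y hy hsy ↦ ?_) hx
    rw [abs_of_pos (sub_pos.2 hsy)] at hy
    nlinarith [le_abs_self (κ y - s)]
  -- the right-endpoint case is the left-endpoint case read in the order dual `ℝᵒᵈ`
  · refine tendsto_iterate_of_isLeast (α := ℝᵒᵈ) hI.dual ⟨hsI, hright⟩ hmaps hcont hfix hnofix
      (hcontr.mono fun y hy hys ↦ ?_) hx
    change y < s at hys
    change y < κ y
    rw [abs_of_neg (sub_neg.2 hys)] at hy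
    nlinarith [neg_abs_le (κ y - s)]

theorem stmt_10_general
    (I : Set ℝ) (κ κ' q q' : ℝ → ℝ) (s : ℝ)
    -- I is a nondegenerate interval containing one of its endpoints s
    (hI : I.OrdConnected) (hsI : s ∈ I)
    (hend : (∀ x ∈ I, s ≤ x) ∨ (∀ x ∈ I, x ≤ s))
    -- κ : I → I is continuously differentiable and strictly increasing
    (hmaps : Set.MapsTo κ I I)
    (hderiv : ∀ x ∈ I, HasDerivWithinAt κ (κ' x) I x)
    -- κ(s) = s, κ'(s) < 1, and κ has no fixed point in the interior of I
    (hfix : κ s = s)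
    (hslope : κ' s < 1)
    (hnofix : ∀ x ∈ interior I, κ x ≠ x)
    -- q : I → (0,∞) is positive, bounded, continuously differentiable, q'(s) ≠ 0
    (hq_pos : ∀ x ∈ I, 0 < q x)
    (hq_deriv : ∀ x ∈ I, HasDerivWithinAt q (q' x) I x) :
    ∀ m : ℕ, ∀ x ∈ insert s (interior I), ∃ L : ℝ, 0 < L ∧
      Filter.Tendsto (fun t : ℕ => ∏ i ∈ Finset.Icc m t, q (κ^[i] x) / q s)
        Filter.atTop (nhds L) := by
  intro m x hx
  have hsign : ∀ y ∈ I, 0 ≤ (κ y - s) * (y - s) := fun y hy ↦ by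
    rcases hend with h | h
    · exact mul_nonneg (sub_nonneg.2 (h _ (hmaps hy))) (sub_nonneg.2 (h y hy))
    · exact mul_nonneg_of_nonpos_of_nonpos (sub_nonpos.2 (h _ (hmaps hy))) (sub_nonpos.2 (h y hy))
  obtain ⟨r, hr, hcontr⟩ :=
    (hderiv s hsI).exists_lt_one_eventually_abs_sub_le hfix hslope hsign
  have horbit : Tendsto (fun n ↦ κ^[n] x) atTop (𝓝[I] s) :=
    tendsto_iterate_of_eventually_abs_sub_le hI hsI hend hmaps
      (fun y hy ↦ (hderiv y hy).continuousWithinAt) hfix hnofix hr hcontr hx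
  have hsum := summable_iterate_sub_of_eventually_abs_sub_le hr hcontr horbit
  have hqs := hq_pos s hsI
  have hxI : x ∈ I := hx.elim (· ▸ hsI) (interior_subset ·)
  refine exists_pos_tendsto_prod_Icc_of_summable_log
    (fun i ↦ div_pos (hq_pos _ (hmaps.iterate i hxI)) hqs) ?_ m
  refine (Real.summable_log_one_add_of_summable
    (((hq_deriv s hsI).summable_comp_sub horbit hsum).div_const (q s))).congr fun i ↦ ?_
  rw [sub_div, div_self hqs.ne', add_sub_cancel]

/-- Lemma: convergence of the infinite product
`∏_{i=m}^∞ q(κ^[i](x))/q(s)` to a positive real number. -/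
theorem stmt_10
    (I : Set ℝ) (κ κ' q q' : ℝ → ℝ) (s : ℝ)
    -- I is a nondegenerate interval containing one of its endpoints s
    (hI : I.OrdConnected) (hsI : s ∈ I) (hnd : ∃ y ∈ I, y ≠ s)
    (hend : (∀ x ∈ I, s ≤ x) ∨ (∀ x ∈ I, x ≤ s))
    -- κ : I → I is continuously differentiable and strictly increasing
    (hmaps : Set.MapsTo κ I I)
    (hderiv : ∀ x ∈ I, HasDerivWithinAt κ (κ' x) I x)
    (hderiv_cont : ContinuousOn κ' I)
    (hmono : StrictMonoOn κ I)
    -- κ(s) = s, κ'(s) < 1, and κ has no fixed point in the interior of I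
    (hfix : κ s = s)
    (hslope : κ' s < 1)
    (hnofix : ∀ x ∈ interior I, κ x ≠ x)
    -- q : I → (0,∞) is positive, bounded, continuously differentiable, q'(s) ≠ 0
    (hq_pos : ∀ x ∈ I, 0 < q x)
    (hq_bdd : ∃ B, ∀ x ∈ I, q x ≤ B)
    (hq_deriv : ∀ x ∈ I, HasDerivWithinAt q (q' x) I x)
    (hq_deriv_cont : ContinuousOn q' I)
    (hq's : q' s ≠ 0) :
    ∀ m : ℕ, ∀ x ∈ insert s (interior I), ∃ L : ℝ, 0 < L ∧
      Filter.Tendsto (fun t : ℕ => ∏ i ∈ Finset.Icc m t, q (κ^[i] x) / q s)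
        Filter.atTop (nhds L) :=
  stmt_10_general I κ κ' q q' s hI hsI hend hmaps hderiv hfix hslope hnofix hq_pos hq_deriv
end

section
/- Let I ⊆ ℝ be a nondegenerate interval containing one of its endpoints s, and let κ : I → I be continuously differentiable and strictly increasing with κ(s) = s, κ'(s) < 1, and κ(x) ≠ x for every x in the interior of I. Let q : I → (0,∞) be positive, bounded, and continuously differentiable with q'(s) ≠ 0, such that q has limits at both endpoints of I and is endpoint maximal at s in I. Then for every integer m ≥ 1, the quantity D_m := sup_{x ∈ I} sup_{t ≥ m} ∏_{i=m}^t q(κ^{[i]}(x))/q(s) satisfies 1 ≤ D_m < ∞. -/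
open Set Filter
open scoped Classical

/-- The filter of approach to the lower endpoint of a set `A ⊆ ℝ` from within `A`. -/
noncomputable def leftEndFilter (A : Set ℝ) : Filter ℝ :=
  if BddBelow A then nhdsWithin (sInf A) (A \ {sInf A})
  else Filter.atBot ⊓ Filter.principal A

/-- The filter of approach to the upper endpoint of a set `A ⊆ ℝ` from within `A`. -/
noncomputable def rightEndFilter (A : Set ℝ) : Filter ℝ :=
  if BddAbove A then nhdsWithin (sSup A) (A \ {sSup A})
  else Filter.atTop ⊓ Filter.principal A

/-- `μ` is endpoint maximal at the endpoint `s` of the interval `A`: it has limits at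
both endpoints of `A` and the limit at `s` is strictly larger than the limit at the
other endpoint. -/
noncomputable def EndpointMaximalAt (μ : ℝ → ℝ) (A : Set ℝ) (s : ℝ) : Prop :=
  ∃ L L' : ℝ, L' < L ∧
    (((∀ x ∈ A, s ≤ x) ∧ Filter.Tendsto μ (leftEndFilter A) (nhds L) ∧
        Filter.Tendsto μ (rightEndFilter A) (nhds L')) ∨
     ((∀ x ∈ A, x ≤ s) ∧ Filter.Tendsto μ (rightEndFilter A) (nhds L) ∧
        Filter.Tendsto μ (leftEndFilter A) (nhds L')))

open Topology

/-!
Reflecting through `x ↦ -x`, we may assume that `s` is the left endpoint; put `d x = x - s`.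
Near `s`, the derivatives at `s` give `d (κ x) ≤ λ d x` with `λ < 1` and
`q x / q s ≤ 1 + C d x`. Beyond some `M`, `q x < q s`, since the limit of `q` at the
other endpoint is below `q s`. On the compact middle range `κ` has no fixed point, so it
moves points towards `s` by at least some `δ > 0`. For `a` large, the bounded potential
`V = a · min d (M - s)` therefore satisfies `q x / q s ≤ exp (V x - V (κ x))` on all of `I`,
and the products along an orbit telescope to at most `exp (a (M - s))`.
-/

theorem prod_iterate_le_exp {α : Type*} {S : Set α} {f : α → α} {g V : α → ℝ} {H : ℝ}
    (hf : MapsTo f S S) (hg : ∀ x ∈ S, 0 ≤ g x) (hV : ∀ x ∈ S, V x ∈ Icc 0 H)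
    (hgV : ∀ x ∈ S, g x ≤ Real.exp (V x - V (f x))) {x : α} (hx : x ∈ S) {m t : ℕ}
    (hmt : m ≤ t) : ∏ i ∈ Finset.Icc m t, g (f^[i] x) ≤ Real.exp H := by
  have horbit : ∀ i, f^[i] x ∈ S := fun i => hf.iterate i hx
  calc ∏ i ∈ Finset.Icc m t, g (f^[i] x)
      ≤ ∏ i ∈ Finset.Icc m t, Real.exp (V (f^[i] x) - V (f^[i + 1] x)) := by
        refine Finset.prod_le_prod (fun i _ => hg _ (horbit i)) fun i _ => ?_
        rw [Function.iterate_succ_apply']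
        exact hgV _ (horbit i)
    _ = Real.exp (V (f^[m] x) - V (f^[t + 1] x)) := by
        rw [← Real.exp_sum, ← Finset.Ico_add_one_right_eq_Icc, ← neg_sub,
          ← Finset.sum_Ico_sub (fun i => V (f^[i] x)) (by omega), ← Finset.sum_neg_distrib]
        simp only [neg_sub]
    _ ≤ Real.exp H :=
        Real.exp_le_exp.2 (by linarith [(hV _ (horbit m)).2, (hV _ (horbit (t + 1))).1])

theorem exists_prod_iterate_le_of_zones {α : Type*} {S : Set α} {f : α → α} {g d : α → ℝ}
    {η R lam δ C Q : ℝ} (hf : MapsTo f S S) (hg : ∀ x ∈ S, 0 ≤ g x) (hd : ∀ x ∈ S, 0 ≤ d x)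
    (hR : 0 ≤ R) (hlam : lam < 1) (hδ : 0 < δ)
    (hnear : ∀ x ∈ S, d x ≤ η → d (f x) ≤ lam * d x ∧ g x ≤ 1 + C * d x)
    (hmid : ∀ x ∈ S, η < d x → d x ≤ R → d (f x) ≤ d x - δ ∧ g x ≤ Q)
    (hfar : ∀ x ∈ S, R < d x → g x ≤ 1) :
    ∃ D, 1 ≤ D ∧ ∀ x ∈ S, ∀ m t : ℕ, m ≤ t → ∏ i ∈ Finset.Icc m t, g (f^[i] x) ≤ D := by
  set a := max (max (C / (1 - lam)) (Real.log (max Q 1) / δ)) 0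
  have ha : 0 ≤ a := le_max_right _ _
  have haC : C ≤ a * (1 - lam) :=
    (div_le_iff₀ (sub_pos.2 hlam)).1 ((le_max_left _ _).trans (le_max_left _ _))
  have haQ : Real.log (max Q 1) ≤ a * δ :=
    (div_le_iff₀ hδ).1 ((le_max_right _ _).trans (le_max_left _ _))
  refine ⟨Real.exp (a * R), Real.one_le_exp (mul_nonneg ha hR), fun x hx m t hmt =>
    prod_iterate_le_exp (V := fun x => a * min (d x) R) hf hg (fun x hx => ⟨?_, ?_⟩) ?_ hx hmt⟩
  · exact mul_nonneg ha (le_min (hd x hx) hR)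
  · exact mul_le_mul_of_nonneg_left (min_le_right _ _) ha
  intro x hx
  have hfx := hd _ (hf hx)
  rcases lt_or_ge R (d x) with hxR | hxR
  · rw [min_eq_right hxR.le]
    calc g x ≤ 1 := hfar x hx hxR
      _ ≤ Real.exp (a * R - a * min (d (f x)) R) := Real.one_le_exp
          (sub_nonneg.2 (mul_le_mul_of_nonneg_left (min_le_right _ _) ha))
  rw [min_eq_left hxR]
  rcases le_or_gt (d x) η with hxη | hxη
  · obtain ⟨hcontr, hgx⟩ := hnear x hx hxη
    have hfxx : d (f x) ≤ d x := hcontr.trans (by nlinarith [hd x hx])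
    rw [min_eq_left (hfxx.trans hxR)]
    calc g x ≤ 1 + C * d x := hgx
      _ ≤ Real.exp (C * d x) := by linarith [Real.add_one_le_exp (C * d x)]
      _ ≤ Real.exp (a * d x - a * d (f x)) := Real.exp_le_exp.2 (by nlinarith [hd x hx])
  · obtain ⟨hstep, hgx⟩ := hmid x hx hxη hxR
    rw [min_eq_left (by linarith)]
    calc g x ≤ max Q 1 := hgx.trans (le_max_left _ _)
      _ = Real.exp (Real.log (max Q 1)) := (Real.exp_log (by positivity)).symm
      _ ≤ Real.exp (a * d x - a * d (f x)) := Real.exp_le_exp.2 (by nlinarith)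

theorem exists_pos_forall_le_sub_self {κ : ℝ → ℝ} {s z a u M : ℝ}
    (hκ : ContinuousOn κ (Ioo s z)) (hnofix : ∀ x ∈ Ioo s z, κ x ≠ x) (ha : a ∈ Ioo s z)
    (hκa : κ a < a) (hsu : s < u) (hMz : M < z) : ∃ δ > 0, ∀ x ∈ Icc u M, δ ≤ x - κ x := by
  have hmove (x : ℝ) (hx : x ∈ Ioo s z) : κ x < x :=
    sub_neg.1 (isPreconnected_Ioo.gt_of_ne (f := fun x => κ x - x) (b := 0)
      (hκ.sub continuousOn_id) (fun w hw => sub_ne_zero.2 (hnofix w hw))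
      ⟨a, ha, sub_neg.2 hκa⟩ hx)
  have hsub : Icc u M ⊆ Ioo s z := Icc_subset_Ioo hsu hMz
  exact isCompact_Icc.exists_forall_le' (continuousOn_id.sub (hκ.mono hsub))
    fun x hx => sub_pos.2 (hmove x (hsub hx))

theorem HasDerivWithinAt.eventually_sub_le_mul_sub {f : ℝ → ℝ} {f' r x : ℝ} {s : Set ℝ}
    (hf : HasDerivWithinAt f f' s x) (hr : f' < r) (hx : x ∈ lowerBounds s) :
    ∀ᶠ y in 𝓝[s] x, f y - f x ≤ r * (y - x) := by
  have hslope := hf.limsup_slope_le hr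
  rw [eventually_nhdsWithin_iff] at hslope ⊢
  filter_upwards [hslope] with y hy hys
  rcases (hx hys).eq_or_lt with rfl | hxy
  · simp
  · have := hy ⟨hys, hxy.ne'⟩
    rw [slope_def_field, div_lt_iff₀ (sub_pos.2 hxy)] at this
    exact this.le

theorem HasDerivWithinAt.comp_neg {f : ℝ → ℝ} {f' x : ℝ} {s : Set ℝ}
    (h : HasDerivWithinAt f f' s x) : HasDerivWithinAt (fun y => f (-y)) (-f') (-s) (-x) := by
  have h' : HasDerivWithinAt f f' s (-(-x)) := by rwa [neg_neg]
  simpa [Function.comp_def] using (h'.comp (-x) (hasDerivWithinAt_neg (-x) (-s)) (fun y hy => hy) :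
    HasDerivWithinAt (fun y => f (-y)) (f' * -1) (-s) (-x))

theorem leftEndFilter_neg (A : Set ℝ) :
    leftEndFilter (-A) = map Neg.neg (rightEndFilter A) := by
  unfold leftEndFilter rightEndFilter
  rw [bddBelow_neg, Real.sInf_neg]
  split_ifs
  · have := (Homeomorph.neg ℝ).isEmbedding.map_nhdsWithin_eq (A \ {sSup A}) (sSup A)
    rw [Homeomorph.coe_neg, image_sdiff neg_injective, image_singleton, image_neg_eq_neg] at this
    exact this.symm
  · rw [Filter.map_inf neg_injective, map_neg_atTop, map_principal, image_neg_eq_neg]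

theorem rightEndFilter_neg (A : Set ℝ) :
    rightEndFilter (-A) = map Neg.neg (leftEndFilter A) := by
  rw [← neg_neg A, leftEndFilter_neg, map_map, neg_neg]
  simp

theorem EndpointMaximalAt.neg {μ : ℝ → ℝ} {A : Set ℝ} {s : ℝ} (h : EndpointMaximalAt μ A s) :
    EndpointMaximalAt (fun x => μ (-x)) (-A) (-s) := by
  obtain ⟨L, L', hLL', hcases⟩ := h
  refine ⟨L, L', hLL', ?_⟩
  simp only [leftEndFilter_neg, rightEndFilter_neg, tendsto_map'_iff, Function.comp_def, neg_neg]
  rcases hcases with ⟨hs, hl, hr⟩ | ⟨hs, hr, hl⟩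
  · exact Or.inr ⟨fun x hx => le_neg.mpr (hs _ hx), hl, hr⟩
  · exact Or.inl ⟨fun x hx => neg_le.mpr (hs _ hx), hr, hl⟩

theorem EndpointMaximalAt.exists_tendsto_rightEndFilter_lt {μ : ℝ → ℝ} {A : Set ℝ} {s : ℝ}
    (h : EndpointMaximalAt μ A s) (hs : IsLeast A s) (hμ : ContinuousWithinAt μ A s)
    (hne : (𝓝[A \ {s}] s).NeBot) : ∃ L < μ s, Tendsto μ (rightEndFilter A) (𝓝 L) := by
  obtain ⟨L, L', hLL', ⟨-, hl, hr⟩ | ⟨hle, -, -⟩⟩ := h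
  · rw [leftEndFilter, if_pos hs.bddBelow, hs.csInf_eq] at hl
    rw [tendsto_nhds_unique (hμ.mono sdiff_subset) hl]
    exact ⟨L', hLL', hr⟩
  · have hempty : A \ {s} = ∅ := by
      ext x
      simpa using fun hx => le_antisymm (hle x hx) (hs.2 hx)
    rw [hempty, nhdsWithin_empty] at hne
    exact absurd rfl hne.ne

theorem exists_forall_lt_of_tendsto_rightEndFilter {I : Set ℝ} {q : ℝ → ℝ} {s y L c : ℝ}
    (hI : I.OrdConnected) (hq : ContinuousOn q I) (hs : s ∈ I) (hy : y ∈ I) (hsy : s < y)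
    (hL : Tendsto q (rightEndFilter I) (𝓝 L)) (hLc : L < c) :
    ∃ M z, s < M ∧ M < z ∧ z ∈ I ∧ ∀ x ∈ I, M < x → q x < c := by
  unfold rightEndFilter at hL
  split_ifs at hL with hbdd
  · set b := sSup I
    have hsb : s < b := hsy.trans_le (le_csSup hbdd hy)
    have hIoo : Ioo s b ⊆ I \ {b} := fun x hx => by
      obtain ⟨w, hw, hxw⟩ := exists_lt_of_lt_csSup ⟨s, hs⟩ hx.2
      exact ⟨hI.out hs hw ⟨hx.1.le, hxw.le⟩, hx.2.ne⟩
    have hne : (𝓝[I \ {b}] b).NeBot := by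
      refine Filter.NeBot.mono ?_ (nhdsWithin_mono b hIoo)
      rw [nhdsWithin_Ioo_eq_nhdsLT hsb]
      infer_instance
    have hqb : b ∈ I → q b < c := fun hb => by
      rwa [tendsto_nhds_unique ((hq b hb).mono sdiff_subset) hL]
    obtain ⟨ε, hε, hball⟩ := Metric.mem_nhdsWithin_iff.mp (hL.eventually_lt_const hLc)
    set M := max (b - ε / 2) ((s + b) / 2)
    have hMb : M < b := max_lt (by linarith) (by linarith)
    obtain ⟨z, hz, hMz⟩ := exists_lt_of_lt_csSup ⟨s, hs⟩ hMb
    refine ⟨M, z, lt_max_of_lt_right (by linarith), hMz, hz, fun x hx hMx => ?_⟩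
    rcases (le_csSup hbdd hx).eq_or_lt with rfl | hxb
    · exact hqb hx
    · refine hball ⟨?_, hx, hxb.ne⟩
      rw [Metric.mem_ball, Real.dist_eq, abs_lt]
      constructor <;> linarith [le_max_left (b - ε / 2) ((s + b) / 2)]
  · obtain ⟨N, hN⟩ := eventually_atTop.mp (eventually_inf_principal.mp (hL.eventually_lt_const hLc))
    obtain ⟨z, hz, hMz⟩ := not_bddAbove_iff.mp hbdd (max N (s + 1))
    exact ⟨max N (s + 1), z, lt_max_of_lt_right (by linarith), hMz, hz,
      fun x hx hMx => hN x ((le_max_left _ _).trans hMx.le) hx⟩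

theorem exists_prod_iterate_div_le_of_mem_lowerBounds {I : Set ℝ} {κ q : ℝ → ℝ} {s k q's : ℝ}
    (hI : I.OrdConnected) (hsI : s ∈ I) (hnd : ∃ y ∈ I, y ≠ s) (hs : s ∈ lowerBounds I)
    (hmaps : MapsTo κ I I) (hκ : ContinuousOn κ I) (hκs : HasDerivWithinAt κ k I s)
    (hfix : κ s = s) (hk : k < 1) (hnofix : ∀ x ∈ interior I, κ x ≠ x)
    (hq_pos : ∀ x ∈ I, 0 < q x) (hq_bdd : ∃ B, ∀ x ∈ I, q x ≤ B) (hq : ContinuousOn q I)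
    (hqs : HasDerivWithinAt q q's I s) (hq_max : EndpointMaximalAt q I s) :
    ∃ D, 1 ≤ D ∧ ∀ x ∈ I, ∀ m t : ℕ, m ≤ t → ∏ i ∈ Finset.Icc m t, q (κ^[i] x) / q s ≤ D := by
  obtain ⟨y, hy, hys⟩ := hnd
  have hsy : s < y := (hs hy).lt_of_ne hys.symm
  have hqs_pos := hq_pos s hsI
  have hne : (𝓝[I \ {s}] s).NeBot := by
    refine Filter.NeBot.mono ?_ (nhdsWithin_mono s fun x hx =>
      ⟨hI.out hsI hy (Ioo_subset_Icc_self hx), hx.1.ne'⟩)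
    rw [nhdsWithin_Ioo_eq_nhdsGT hsy]
    infer_instance
  obtain ⟨L, hLq, hL⟩ := hq_max.exists_tendsto_rightEndFilter_lt ⟨hsI, hs⟩ (hq s hsI) hne
  obtain ⟨M, z, hsM, hMz, hz, hfar⟩ :=
    exists_forall_lt_of_tendsto_rightEndFilter hI hq hsI hy hsy hL hLq
  obtain ⟨lam, hklam, hlam⟩ := exists_between hk
  obtain ⟨ε, hε, hball⟩ := Metric.mem_nhdsWithin_iff.mp
    ((hκs.eventually_sub_le_mul_sub hklam hs).and
      (hqs.eventually_sub_le_mul_sub (lt_add_one q's) hs))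
  obtain ⟨η, hη, hηε⟩ := exists_between hε
  have hnear : ∀ x ∈ I, x - s ≤ η →
      κ x - s ≤ lam * (x - s) ∧ q x - q s ≤ (q's + 1) * (x - s) := fun x hx hxη => by
    have hxs := hs hx
    have := hball ⟨by rw [Metric.mem_ball, Real.dist_eq, abs_lt]; constructor <;> linarith, hx⟩
    rwa [hfix] at this
  have hIcc : Icc s z ⊆ I := hI.out hsI hz
  obtain ⟨a, ha, haη⟩ : ∃ a ∈ Ioo s z, a - s ≤ η :=
    ⟨min (s + η) M, ⟨lt_min (by linarith) hsM, (min_le_right _ _).trans_lt hMz⟩,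
      by linarith [min_le_left (s + η) M]⟩
  have hκa := (hnear a (hIcc (Ioo_subset_Icc_self ha)) haη).1
  obtain ⟨δ, hδ, hmid⟩ := exists_pos_forall_le_sub_self
    (hκ.mono (Ioo_subset_Icc_self.trans hIcc))
    (fun x hx => hnofix x (isOpen_Ioo.subset_interior_iff.2 (Ioo_subset_Icc_self.trans hIcc) hx))
    ha (by nlinarith [mul_pos (sub_pos.2 hlam) (sub_pos.2 ha.1)]) (by linarith : s < s + η) hMz
  obtain ⟨B, hB⟩ := hq_bdd
  refine exists_prod_iterate_le_of_zones (d := fun x => x - s) (g := fun x => q x / q s)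
    (η := η) (R := M - s) (lam := lam) (C := (q's + 1) / q s) (Q := B / q s) hmaps
    (fun x hx => div_nonneg (hq_pos x hx).le hqs_pos.le) (fun x hx => sub_nonneg.2 (hs hx))
    (by linarith) hlam hδ (fun x hx hxη => ?_) (fun x hx hxη hxR => ?_) (fun x hx hxR => ?_)
  · obtain ⟨hκx, hqx⟩ := hnear x hx hxη
    refine ⟨hκx, ?_⟩
    rw [div_le_iff₀ hqs_pos]
    field_simp
    linarith
  · exact ⟨by linarith [hmid x ⟨by linarith, by linarith⟩],
      div_le_div_of_nonneg_right (hB x hx) hqs_pos.le⟩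
  · rw [div_le_one hqs_pos]
    exact (hfar x hx (by linarith)).le

theorem exists_prod_iterate_div_le_of_mem_upperBounds {I : Set ℝ} {κ q : ℝ → ℝ} {s k q's : ℝ}
    (hI : I.OrdConnected) (hsI : s ∈ I) (hnd : ∃ y ∈ I, y ≠ s) (hs : s ∈ upperBounds I)
    (hmaps : MapsTo κ I I) (hκ : ContinuousOn κ I) (hκs : HasDerivWithinAt κ k I s)
    (hfix : κ s = s) (hk : k < 1) (hnofix : ∀ x ∈ interior I, κ x ≠ x)
    (hq_pos : ∀ x ∈ I, 0 < q x) (hq_bdd : ∃ B, ∀ x ∈ I, q x ≤ B) (hq : ContinuousOn q I)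
    (hqs : HasDerivWithinAt q q's I s) (hq_max : EndpointMaximalAt q I s) :
    ∃ D, 1 ≤ D ∧ ∀ x ∈ I, ∀ m t : ℕ, m ≤ t → ∏ i ∈ Finset.Icc m t, q (κ^[i] x) / q s ≤ D := by
  obtain ⟨y, hy, hys⟩ := hnd
  obtain ⟨B, hB⟩ := hq_bdd
  obtain ⟨D, hD1, hD⟩ := exists_prod_iterate_div_le_of_mem_lowerBounds (I := -I)
    (κ := fun x => -κ (-x)) (q := fun x => q (-x)) (s := -s)
    (hI.preimage_anti fun _ _ h => neg_le_neg h) (neg_mem_neg.2 hsI)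
    ⟨-y, neg_mem_neg.2 hy, neg_injective.ne hys⟩ (fun x hx => neg_le.2 (hs hx))
    (fun x hx => neg_mem_neg.2 (hmaps hx)) (hκ.comp continuousOn_neg fun x hx => hx).neg
    (by have := hκs.comp_neg.neg; rwa [neg_neg] at this)
    (by simp [hfix]) hk
    (fun x hx hfx => hnofix (-x)
      (show x ∈ Neg.neg ⁻¹' interior I from (Homeomorph.neg ℝ).preimage_interior I ▸ hx)
      (by linarith))
    (fun x hx => hq_pos _ hx) ⟨B, fun x hx => hB _ hx⟩ (hq.comp continuousOn_neg fun x hx => hx)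
    (by simpa using hqs.comp_neg) (by simpa using hq_max.neg)
  have hiter (i : ℕ) (x : ℝ) : (fun x => -κ (-x))^[i] (-x) = -κ^[i] x :=
    ((Function.Semiconj.iterate_right (f := Neg.neg) (fun x => by simp) i) x).symm
  refine ⟨D, hD1, fun x hx m t hmt => ?_⟩
  simpa [hiter] using hD (-x) (neg_mem_neg.2 hx) m t hmt

theorem stmt_11_general
    (I : Set ℝ) (κ κ' q q' : ℝ → ℝ) (s : ℝ)
    -- I is a nondegenerate interval containing one of its endpoints s
    (hI : I.OrdConnected) (hsI : s ∈ I) (hnd : ∃ y ∈ I, y ≠ s)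
    (hend : (∀ x ∈ I, s ≤ x) ∨ (∀ x ∈ I, x ≤ s))
    -- κ : I → I is continuously differentiable and strictly increasing
    (hmaps : Set.MapsTo κ I I)
    (hderiv : ∀ x ∈ I, HasDerivWithinAt κ (κ' x) I x)
    -- κ(s) = s, κ'(s) < 1, and κ has no fixed point in the interior of I
    (hfix : κ s = s)
    (hslope : κ' s < 1)
    (hnofix : ∀ x ∈ interior I, κ x ≠ x)
    -- q : I → (0,∞) is positive, bounded, continuously differentiable, q'(s) ≠ 0
    (hq_pos : ∀ x ∈ I, 0 < q x)
    (hq_bdd : ∃ B, ∀ x ∈ I, q x ≤ B)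
    (hq_deriv : ∀ x ∈ I, HasDerivWithinAt q (q' x) I x)
    -- q has limits at both endpoints of I and is endpoint maximal at s in I
    (hq_max : EndpointMaximalAt q I s) :
    ∀ m : ℕ, 1 ≤ m → ∃ D : ℝ, 1 ≤ D ∧
      ∀ x ∈ I, ∀ t : ℕ, m ≤ t →
        (∏ i ∈ Finset.Icc m t, q (κ^[i] x) / q s) ≤ D := by
  intro m _
  have hκ : ContinuousOn κ I := fun x hx => (hderiv x hx).continuousWithinAt
  have hq : ContinuousOn q I := fun x hx => (hq_deriv x hx).continuousWithinAt
  obtain ⟨D, hD1, hD⟩ := hend.elim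
    (fun hs => exists_prod_iterate_div_le_of_mem_lowerBounds hI hsI hnd hs hmaps hκ
      (hderiv s hsI) hfix hslope hnofix hq_pos hq_bdd hq (hq_deriv s hsI) hq_max)
    (fun hs => exists_prod_iterate_div_le_of_mem_upperBounds hI hsI hnd hs hmaps hκ
      (hderiv s hsI) hfix hslope hnofix hq_pos hq_bdd hq (hq_deriv s hsI) hq_max)
  exact ⟨D, hD1, fun x hx t ht => hD x hx m t ht⟩

/-- Lemma: the supremum `D_m` of the partial products is finite and
at least 1. -/
theorem stmt_11
    (I : Set ℝ) (κ κ' q q' : ℝ → ℝ) (s : ℝ)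
    -- I is a nondegenerate interval containing one of its endpoints s
    (hI : I.OrdConnected) (hsI : s ∈ I) (hnd : ∃ y ∈ I, y ≠ s)
    (hend : (∀ x ∈ I, s ≤ x) ∨ (∀ x ∈ I, x ≤ s))
    -- κ : I → I is continuously differentiable and strictly increasing
    (hmaps : Set.MapsTo κ I I)
    (hderiv : ∀ x ∈ I, HasDerivWithinAt κ (κ' x) I x)
    (hderiv_cont : ContinuousOn κ' I)
    (hmono : StrictMonoOn κ I)
    -- κ(s) = s, κ'(s) < 1, and κ has no fixed point in the interior of I
    (hfix : κ s = s)
    (hslope : κ' s < 1)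
    (hnofix : ∀ x ∈ interior I, κ x ≠ x)
    -- q : I → (0,∞) is positive, bounded, continuously differentiable, q'(s) ≠ 0
    (hq_pos : ∀ x ∈ I, 0 < q x)
    (hq_bdd : ∃ B, ∀ x ∈ I, q x ≤ B)
    (hq_deriv : ∀ x ∈ I, HasDerivWithinAt q (q' x) I x)
    (hq_deriv_cont : ContinuousOn q' I)
    (hq's : q' s ≠ 0)
    -- q has limits at both endpoints of I and is endpoint maximal at s in I
    (hq_max : EndpointMaximalAt q I s) :
    ∀ m : ℕ, 1 ≤ m → ∃ D : ℝ, 1 ≤ D ∧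
      ∀ x ∈ I, ∀ t : ℕ, m ≤ t →
        (∏ i ∈ Finset.Icc m t, q (κ^[i] x) / q s) ≤ D :=
  stmt_11_general I κ κ' q q' s hI hsI hnd hend hmaps hderiv hfix hslope hnofix hq_pos hq_bdd
    hq_deriv hq_max
end

section
/- Consider the relative-capital process on 𝒳 = [1,∞) with transmission function τ̂(x) = x^{α+β} and fertility function n̂(x) = c/x for constants α, β ∈ (0,1) and c > 0. Then: (a) the distribution degenerate at 1 is a steady state of the population process, i.e. if F(x) = 𝟙[1 ≤ x] then (1/∫ n̂ dF) ∫_𝒳 𝟙[τ̂(z) ≤ x] n̂(z) dF(z) = F(x) for all x ∈ 𝒳; (b) if α+β < 1 and the initial distribution admits a density f̂₀ that is continuous, bounded, and supported on [1,∞), then the process converges to the distribution degenerate at 1: lim_{t→∞} F̂_t(x) = 1 for every x > 1, where F̂_t(x) := ∫_{1}^{x} f̂_t(z) dz. -/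
/-!
Write `γ = α + β`. The density step is a push-forward: `f_{t+1}` is the density of the image
under `τ̂(y) = y ^ γ` of the measure `n̂ f_t dy / 𝔼_t[n̂]`. Iterating, `f_t` is the image under
`y ↦ y ^ γ^t` of the probability density proportional to `y ^ (-s_t) f₀(y)`, where
`s_t = 1 + γ + ⋯ + γ^(t-1)` collects the fertility factors `n̂(τ̂^k(y)) = c y ^ (-γ^k)`. Hence
`F̂_t(x)` is the `y ^ (-s_t) f₀`-mass of `[1, x ^ γ^(-t)]`. For `γ < 1` the cutoff `x ^ γ^(-t)`
escapes to infinity while `s_t ≤ 1 / (1 - γ)` stays bounded, so the total mass stays above that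
of `y ^ (-1 / (1 - γ)) f₀ > 0` and the missing mass, at most `∫_{x ^ γ^(-t)}^∞ f₀`, vanishes.
-/

open MeasureTheory Set Filter Topology
open scoped Classical

section PowerMap

variable {p : ℝ}

lemma image_rpow_Ici_one (hp : 0 < p) : (· ^ p) '' Ici (1 : ℝ) = Ici 1 := by
  ext z
  refine ⟨?_, fun hz => ⟨z ^ p⁻¹, Real.one_le_rpow hz (inv_pos.2 hp).le,
    Real.rpow_inv_rpow (zero_le_one.trans hz) hp.ne'⟩⟩
  rintro ⟨y, hy, rfl⟩
  exact Real.one_le_rpow hy hp.le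

lemma image_rpow_Icc_one (hp : 0 < p) {b : ℝ} (hb : 1 ≤ b) :
    (· ^ p) '' Icc 1 (b ^ p⁻¹) = Icc 1 b := by
  ext z
  constructor
  · rintro ⟨y, ⟨hy1, hyb⟩, rfl⟩
    refine ⟨Real.one_le_rpow hy1 hp.le, ?_⟩
    calc y ^ p ≤ (b ^ p⁻¹) ^ p := Real.rpow_le_rpow (zero_le_one.trans hy1) hyb hp.le
      _ = b := Real.rpow_inv_rpow (zero_le_one.trans hb) hp.ne'
  · rintro ⟨hz1, hzb⟩
    exact ⟨z ^ p⁻¹, ⟨Real.one_le_rpow hz1 (inv_pos.2 hp).le,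
      Real.rpow_le_rpow (zero_le_one.trans hz1) hzb (inv_pos.2 hp).le⟩,
      Real.rpow_inv_rpow (zero_le_one.trans hz1) hp.ne'⟩

lemma setIntegral_image_rpow (hp : 0 < p) {s : Set ℝ} (hs : MeasurableSet s) (hs0 : s ⊆ Ioi 0)
    (g : ℝ → ℝ) : ∫ z in (· ^ p) '' s, g z = ∫ y in s, p * y ^ (p - 1) * g (y ^ p) := by
  rw [integral_image_eq_integral_abs_deriv_smul hs
    (fun y hy => (Real.hasDerivAt_rpow_const (Or.inl (hs0 hy).ne')).hasDerivWithinAt)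
    ((Real.rpow_left_injOn hp.ne').mono (hs0.trans Ioi_subset_Ici_self))]
  refine setIntegral_congr_fun hs fun y hy => ?_
  have : 0 < y := hs0 hy
  rw [smul_eq_mul, abs_of_pos (by positivity)]

end PowerMap

section WeightedMass

variable {g : ℝ → ℝ}

lemma integrableOn_rpow_neg_mul (hg : IntegrableOn g (Ici 1)) {r : ℝ} (hr : 0 ≤ r) :
    IntegrableOn (fun y => y ^ (-r) * g y) (Ici 1) := by
  refine hg.bdd_mul (c := 1) (measurable_id.pow_const _).aestronglyMeasurable
    ((ae_restrict_iff' measurableSet_Ici).2 (Eventually.of_forall fun y (hy : 1 ≤ y) => ?_))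
  rw [Real.norm_of_nonneg (Real.rpow_nonneg (zero_le_one.trans hy) _)]
  exact Real.rpow_le_one_of_one_le_of_nonpos hy (neg_nonpos.2 hr)

lemma rpow_neg_mul_nonneg (hg0 : ∀ y ∈ Ici 1, 0 ≤ g y) (r : ℝ) :
    ∀ y ∈ Ici (1 : ℝ), 0 ≤ y ^ (-r) * g y := fun y (hy : 1 ≤ y) =>
  mul_nonneg (Real.rpow_nonneg (zero_le_one.trans hy) _) (hg0 y hy)

lemma setIntegral_rpow_neg_mul_pos (hg : IntegrableOn g (Ici 1)) (hg0 : ∀ y ∈ Ici 1, 0 ≤ g y)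
    (hg1 : 0 < ∫ y in Ici 1, g y) {r : ℝ} (hr : 0 ≤ r) :
    0 < ∫ y in Ici 1, y ^ (-r) * g y := by
  rw [setIntegral_pos_iff_support_of_nonneg_ae
    (ae_restrict_of_forall_mem measurableSet_Ici hg0) hg] at hg1
  rw [setIntegral_pos_iff_support_of_nonneg_ae
    (ae_restrict_of_forall_mem measurableSet_Ici (rpow_neg_mul_nonneg hg0 r))
    (integrableOn_rpow_neg_mul hg hr)]
  convert hg1 using 2
  ext y
  simp only [mem_inter_iff, Function.mem_support, mem_Ici]
  exact and_congr_left fun hy => by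
    simp [(Real.rpow_pos_of_pos (zero_lt_one.trans_le hy) (-r)).ne']

lemma setIntegral_Ici_sub_setIntegral_Icc_le (hg : IntegrableOn g (Ici 1))
    (hg0 : ∀ y ∈ Ici 1, 0 ≤ g y) {r : ℝ} (hr : 0 ≤ r) {X : ℝ} (hX : 1 ≤ X) :
    (∫ y in Ici 1, y ^ (-r) * g y) - ∫ y in Icc 1 X, y ^ (-r) * g y ≤ ∫ y in Ioi X, g y := by
  have hint := integrableOn_rpow_neg_mul hg hr
  have hIoi : Ioi X ⊆ Ici 1 := fun y hy => hX.trans (le_of_lt hy)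
  rw [← Icc_union_Ioi_eq_Ici hX, setIntegral_union
    ((Iic_disjoint_Ioi le_rfl).mono_left Icc_subset_Iic_self) measurableSet_Ioi
    (hint.mono_set Icc_subset_Ici_self) (hint.mono_set hIoi), add_sub_cancel_left]
  refine setIntegral_mono_on (hint.mono_set hIoi) (hg.mono_set hIoi) measurableSet_Ioi
    fun y hy => ?_
  exact mul_le_of_le_one_left (hg0 y (hIoi hy))
    (Real.rpow_le_one_of_one_le_of_nonpos (hIoi hy) (neg_nonpos.2 hr))

lemma tendsto_setIntegral_Icc_div_setIntegral_Ici
    (hg : IntegrableOn g (Ici 1)) (hg0 : ∀ y ∈ Ici 1, 0 ≤ g y) (hg1 : 0 < ∫ y in Ici 1, g y)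
    {r : ℕ → ℝ} {R : ℝ} (hr : ∀ i, r i ∈ Icc 0 R) {X : ℕ → ℝ} (hX : Tendsto X atTop atTop) :
    Tendsto (fun i => (∫ y in Icc 1 (X i), y ^ (-r i) * g y) / ∫ y in Ici 1, y ^ (-r i) * g y)
      atTop (𝓝 1) := by
  have hR : 0 ≤ R := (hr 0).1.trans (hr 0).2
  set W := ∫ y in Ici 1, y ^ (-R) * g y
  have hW : 0 < W := setIntegral_rpow_neg_mul_pos hg hg0 hg1 hR
  have hWle : ∀ i, W ≤ ∫ y in Ici 1, y ^ (-r i) * g y := fun i =>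
    setIntegral_mono_on (integrableOn_rpow_neg_mul hg hR)
      (integrableOn_rpow_neg_mul hg (hr i).1) measurableSet_Ici
      fun y (hy : 1 ≤ y) => mul_le_mul_of_nonneg_right
        (Real.rpow_le_rpow_of_exponent_le hy (neg_le_neg (hr i).2)) (hg0 y hy)
  have hlower : Tendsto (fun i => 1 - (∫ y in Ioi (X i), g y) / W) atTop (𝓝 1) := by
    simpa using ((tendsto_integral_Ioi_zero hX).div_const W).const_sub 1
  refine tendsto_of_tendsto_of_tendsto_of_le_of_le' hlower tendsto_const_nhds ?_
    (Eventually.of_forall fun i => div_le_one_of_le₀ ?_ (setIntegral_nonneg measurableSet_Ici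
      (rpow_neg_mul_nonneg hg0 (r i))))
  · filter_upwards [hX.eventually_ge_atTop 1] with i hXi
    have hWi := hW.trans_le (hWle i)
    calc 1 - (∫ y in Ioi (X i), g y) / W
        ≤ 1 - ((∫ y in Ici 1, y ^ (-r i) * g y) - ∫ y in Icc 1 (X i), y ^ (-r i) * g y)
          / ∫ y in Ici 1, y ^ (-r i) * g y := by
          gcongr 1 - ?_
          exact div_le_div₀ (setIntegral_nonneg measurableSet_Ioi fun y (hy : X i < y) =>
            hg0 y (hXi.trans hy.le)) (setIntegral_Ici_sub_setIntegral_Icc_le hg hg0 (hr i).1 hXi)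
            hW (hWle i)
      _ = _ := by field_simp; ring
  · exact setIntegral_mono_set (integrableOn_rpow_neg_mul hg (hr i).1)
      (ae_restrict_of_forall_mem measurableSet_Ici (rpow_neg_mul_nonneg hg0 (r i)))
      Icc_subset_Ici_self.eventuallyLE

end WeightedMass

/-- `h` is obtained from `g` by one step of the density process with fertility `n̂(x) = c / x`,
transmission `τ̂(x) = x ^ γ` and normalizing constant `E = 𝔼[n̂]`. -/
def IsRelCapitalStep (γ c E : ℝ) (g h : ℝ → ℝ) : Prop :=
  ∀ x ∈ Ici (1 : ℝ),
    h x = 1 / E * ((c / x ^ γ⁻¹) / (γ * (x ^ γ⁻¹) ^ (γ - 1))) * g (x ^ γ⁻¹)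

namespace IsRelCapitalStep

variable {γ c E : ℝ} {g h : ℝ → ℝ}

lemma jacobian_mul_apply_rpow (hstep : IsRelCapitalStep γ c E g h) (hγ : 0 < γ) {y : ℝ}
    (hy : 1 ≤ y) : γ * y ^ (γ - 1) * h (y ^ γ) = 1 / E * (c / y * g y) := by
  have hy0 : 0 < y := zero_lt_one.trans_le hy
  rw [hstep _ (Real.one_le_rpow hy hγ.le), Real.rpow_rpow_inv hy0.le hγ.ne']
  have : y ^ (γ - 1) ≠ 0 := (Real.rpow_pos_of_pos hy0 _).ne'
  field_simp

lemma setIntegral_Ici (hstep : IsRelCapitalStep γ c E g h) (hγ : 0 < γ) :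
    ∫ x in Ici 1, h x = 1 / E * ∫ y in Ici 1, c / y * g y := by
  conv_lhs => rw [← image_rpow_Ici_one hγ]
  rw [setIntegral_image_rpow hγ measurableSet_Ici (Ici_subset_Ioi.2 zero_lt_one),
    setIntegral_congr_fun measurableSet_Ici fun y hy => hstep.jacobian_mul_apply_rpow hγ hy,
    integral_const_mul]

end IsRelCapitalStep

section Iteration

variable {γ c : ℝ} {E : ℕ → ℝ} {f : ℕ → ℝ → ℝ}

lemma exists_jacobian_mul_iterate_eq (hγ : 0 < γ)
    (hstep : ∀ t, IsRelCapitalStep γ c (E t) (f t) (f (t + 1))) (t : ℕ) :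
    ∃ K, ∀ y ∈ Ici (1 : ℝ), γ ^ t * y ^ (γ ^ t - 1) * f t (y ^ γ ^ t)
      = K * (y ^ (-∑ k ∈ Finset.range t, γ ^ k) * f 0 y) := by
  induction t with
  | zero => exact ⟨1, fun y _ => by simp⟩
  | succ t ih =>
    obtain ⟨K, hK⟩ := ih
    refine ⟨c / E t * K, fun y (hy : 1 ≤ y) => ?_⟩
    have hy0 : 0 < y := zero_lt_one.trans_le hy
    set p := γ ^ t
    set u := y ^ p
    have hchain :
        γ ^ (t + 1) * y ^ (γ ^ (t + 1) - 1) = γ * u ^ (γ - 1) * (p * y ^ (p - 1)) := by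
      rw [← Real.rpow_mul hy0.le, pow_succ, show p * γ - 1 = p * (γ - 1) + (p - 1) by ring,
        Real.rpow_add hy0]
      ring
    calc γ ^ (t + 1) * y ^ (γ ^ (t + 1) - 1) * f (t + 1) (y ^ γ ^ (t + 1))
        = p * y ^ (p - 1) * (γ * u ^ (γ - 1) * f (t + 1) (u ^ γ)) := by
          rw [hchain, pow_succ, Real.rpow_mul hy0.le]
          ring
      _ = c / E t * u⁻¹ * (p * y ^ (p - 1) * f t u) := by
          rw [(hstep t).jacobian_mul_apply_rpow hγ (Real.one_le_rpow hy (pow_pos hγ t).le)]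
          ring
      _ = c / E t * K * (y ^ (-∑ k ∈ Finset.range (t + 1), γ ^ k) * f 0 y) := by
          rw [hK y hy, Finset.sum_range_succ, neg_add, Real.rpow_add hy0, Real.rpow_neg hy0.le p]
          ring

lemma setIntegral_Ici_eq_one (hγ : 0 < γ) (hf0 : ∫ x in Ici 1, f 0 x = 1)
    (hstep : ∀ t, IsRelCapitalStep γ c (∫ z in Ici 1, c / z * f t z) (f t) (f (t + 1)))
    (hE : ∀ t, ∫ z in Ici 1, c / z * f t z ≠ 0) : ∀ t, ∫ x in Ici 1, f t x = 1
  | 0 => hf0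
  | t + 1 => by rw [(hstep t).setIntegral_Ici hγ, one_div_mul_cancel (hE t)]

lemma setIntegral_Icc_eq_div (hγ : 0 < γ)
    (hstep : ∀ t, IsRelCapitalStep γ c (E t) (f t) (f (t + 1)))
    (hnorm : ∀ t, ∫ x in Ici 1, f t x = 1) (t : ℕ) {b : ℝ} (hb : 1 ≤ b) :
    ∫ z in Icc 1 b, f t z
      = (∫ y in Icc 1 (b ^ (γ ^ t)⁻¹), y ^ (-∑ k ∈ Finset.range t, γ ^ k) * f 0 y)
        / ∫ y in Ici 1, y ^ (-∑ k ∈ Finset.range t, γ ^ k) * f 0 y := by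
  obtain ⟨K, hK⟩ := exists_jacobian_mul_iterate_eq hγ hstep t
  have hp : 0 < γ ^ t := pow_pos hγ t
  have hpull : ∀ s ⊆ Ici (1 : ℝ), MeasurableSet s → ∫ z in (· ^ γ ^ t) '' s, f t z
      = K * ∫ y in s, y ^ (-∑ k ∈ Finset.range t, γ ^ k) * f 0 y := fun s hs1 hs => by
    rw [setIntegral_image_rpow hp hs (hs1.trans (Ici_subset_Ioi.2 zero_lt_one)),
      setIntegral_congr_fun hs fun y hy => hK y (hs1 hy), integral_const_mul]
  have hKW := hpull _ subset_rfl measurableSet_Ici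
  rw [image_rpow_Ici_one hp, hnorm, eq_comm] at hKW
  rw [← image_rpow_Icc_one hp hb, hpull _ Icc_subset_Ici_self measurableSet_Icc,
    eq_div_iff (right_ne_zero_of_mul_eq_one hKW), mul_right_comm, hKW, one_mul]

end Iteration

theorem stmt_17_general
    (α β c : ℝ) (f : ℕ → ℝ → ℝ)
    (hα : α ∈ Set.Ioo (0:ℝ) 1) (hβ : β ∈ Set.Ioo (0:ℝ) 1) (hc : 0 < c)
    -- f₀ is a probability density on 𝒳 = [1,∞)
    (hf0_nonneg : ∀ x, 0 ≤ f 0 x)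
    (hf0_int : IntegrableOn (f 0) (Set.Ici (1:ℝ)))
    (hf0_one : (∫ x in Set.Ici (1:ℝ), f 0 x) = 1)
    -- (f_t) is the density process with n̂(x) = c/x, τ̂(x) = x^{α+β}, ρ̂(x) = x^{1/(α+β)}
    (hrec : ∀ t, ∀ x ∈ Set.Ici (1:ℝ),
      f (t + 1) x
        = (1 / ∫ z in Set.Ici (1:ℝ), (c / z) * f t z)
            * ((c / x ^ (α + β)⁻¹) / ((α + β) * (x ^ (α + β)⁻¹) ^ (α + β - 1)))
            * f t (x ^ (α + β)⁻¹))
    (hE_pos : ∀ t, 0 < ∫ z in Set.Ici (1:ℝ), (c / z) * f t z) :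
    -- (a) the distribution degenerate at 1 (i.e. the Dirac mass at 1, whose CDF is
    -- F(x) = 𝟙[1 ≤ x]) is a steady state of the population process
    (∀ x ∈ Set.Ici (1:ℝ),
      (1 / ∫ z, c / z ∂(Measure.dirac (1:ℝ)))
          * (∫ z, (if z ^ (α + β) ≤ x then c / z else 0) ∂(Measure.dirac (1:ℝ)))
        = if (1:ℝ) ≤ x then 1 else 0) ∧
    -- (b) if α+β < 1 and f₀ is continuous, bounded, and supported on [1,∞), then the
    -- process converges to the distribution degenerate at 1
    ((α + β < 1 ∧ ContinuousOn (f 0) (Set.Ici (1:ℝ)) ∧ (∃ B, ∀ x, f 0 x ≤ B) ∧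
        closure {x | f 0 x ≠ 0} = Set.Ici (1:ℝ)) →
      ∀ x : ℝ, 1 < x →
        Filter.Tendsto (fun t => ∫ z in Set.Icc (1:ℝ) x, f t z)
          Filter.atTop (nhds 1)) := by
  refine ⟨fun x (hx : 1 ≤ x) => by simp [hx, hc.ne'], ?_⟩
  rintro ⟨hγ1, -, -, -⟩ x hx
  have hγ : 0 < α + β := add_pos hα.1 hβ.1
  have hnorm := setIntegral_Ici_eq_one hγ hf0_one hrec fun t => (hE_pos t).ne'
  have hexp : ∀ t, ∑ k ∈ Finset.range t, (α + β) ^ k ∈ Icc 0 (1 - (α + β))⁻¹ := fun t =>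
    ⟨Finset.sum_nonneg fun k _ => (pow_pos hγ k).le,
      by simpa [← Finset.range_eq_Ico] using geom_sum_Ico_le_of_lt_one (m := 0) (n := t) hγ.le hγ1⟩
  have hcutoff : Tendsto (fun t : ℕ => x ^ ((α + β) ^ t)⁻¹) atTop atTop := by
    simpa [Function.comp_def, inv_pow] using (tendsto_rpow_atTop_of_base_gt_one x hx).comp
      (tendsto_pow_atTop_atTop_of_one_lt ((one_lt_inv₀ hγ).2 hγ1))
  refine (tendsto_setIntegral_Icc_div_setIntegral_Ici hf0_int (fun y _ => hf0_nonneg y)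
    (by rw [hf0_one]; exact one_pos) hexp hcutoff).congr fun t => ?_
  exact (setIntegral_Icc_eq_div hγ hrec hnorm t hx.le).symm

/-- (Theorem 2(ii): for the relative-capital process with
`τ̂(x) = x^{α+β}` and `n̂(x) = c/x` on `[1,∞)`, the distribution degenerate at 1 is a
steady state of the population process, and for `α+β < 1` the process converges to it). -/
theorem stmt_17
    (α β c : ℝ) (f : ℕ → ℝ → ℝ)
    (hα : α ∈ Set.Ioo (0:ℝ) 1) (hβ : β ∈ Set.Ioo (0:ℝ) 1) (hc : 0 < c)
    -- f₀ is a probability density on 𝒳 = [1,∞)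
    (hf0_nonneg : ∀ x, 0 ≤ f 0 x)
    (hf0_zero : ∀ x ∉ Set.Ici (1:ℝ), f 0 x = 0)
    (hf0_int : IntegrableOn (f 0) (Set.Ici (1:ℝ)))
    (hf0_one : (∫ x in Set.Ici (1:ℝ), f 0 x) = 1)
    -- (f_t) is the density process with n̂(x) = c/x, τ̂(x) = x^{α+β}, ρ̂(x) = x^{1/(α+β)}
    (hrec : ∀ t, ∀ x ∈ Set.Ici (1:ℝ),
      f (t + 1) x
        = (1 / ∫ z in Set.Ici (1:ℝ), (c / z) * f t z)
            * ((c / x ^ (α + β)⁻¹) / ((α + β) * (x ^ (α + β)⁻¹) ^ (α + β - 1)))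
            * f t (x ^ (α + β)⁻¹))
    (hrec_zero : ∀ t, ∀ x ∉ Set.Ici (1:ℝ), f (t + 1) x = 0)
    (hnf_int : ∀ t, IntegrableOn (fun z => (c / z) * f t z) (Set.Ici (1:ℝ)))
    (hE_pos : ∀ t, 0 < ∫ z in Set.Ici (1:ℝ), (c / z) * f t z) :
    -- (a) the distribution degenerate at 1 (i.e. the Dirac mass at 1, whose CDF is
    -- F(x) = 𝟙[1 ≤ x]) is a steady state of the population process
    (∀ x ∈ Set.Ici (1:ℝ),
      (1 / ∫ z, c / z ∂(Measure.dirac (1:ℝ)))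
          * (∫ z, (if z ^ (α + β) ≤ x then c / z else 0) ∂(Measure.dirac (1:ℝ)))
        = if (1:ℝ) ≤ x then 1 else 0) ∧
    -- (b) if α+β < 1 and f₀ is continuous, bounded, and supported on [1,∞), then the
    -- process converges to the distribution degenerate at 1
    ((α + β < 1 ∧ ContinuousOn (f 0) (Set.Ici (1:ℝ)) ∧ (∃ B, ∀ x, f 0 x ≤ B) ∧
        closure {x | f 0 x ≠ 0} = Set.Ici (1:ℝ)) →
      ∀ x : ℝ, 1 < x →
        Filter.Tendsto (fun t => ∫ z in Set.Icc (1:ℝ) x, f t z)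
          Filter.atTop (nhds 1)) :=
  stmt_17_general α β c f hα hβ hc hf0_nonneg hf0_int hf0_one hrec hE_pos
end
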